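/- The function u : ℝ² → ℝ defined by u(x,t) = −1 + 4/(1 + 4(x − 6t)²) is a smooth solution of the mKdV equation uₜ + 6u²uₓ + uₓₓₓ = 0. -/

import Mathlib

/-- Partial derivative in the first (space) variable. -/
noncomputable def pdX (u : ℝ → ℝ → ℝ) : ℝ → ℝ → ℝ := fun x t => deriv (fun y => u y t) x

/-- Partial derivative in the second (time) variable. -/
noncomputable def pdT (u : ℝ → ℝ → ℝ) : ℝ → ℝ → ℝ := fun x t => deriv (fun s => u x s) t

/-- `u` solves the mKdV equation `uₜ + 6u²uₓ + uₓₓₓ = 0`. -/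
def IsMKdV (u : ℝ → ℝ → ℝ) : Prop :=
  ∀ x t, pdT u x t + 6 * (u x t) ^ 2 * pdX u x t + pdX (pdX (pdX u)) x t = 0

noncomputable def f0 (z : ℝ) : ℝ := -1 + 4 / (1 + 4 * z ^ 2)
noncomputable def f1 (z : ℝ) : ℝ := -32 * z / (1 + 4 * z ^ 2) ^ 2
noncomputable def f2 (z : ℝ) : ℝ := (384 * z ^ 2 - 32) / (1 + 4 * z ^ 2) ^ 3
noncomputable def f3 (z : ℝ) : ℝ := (1536 * z - 6144 * z ^ 3) / (1 + 4 * z ^ 2) ^ 4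

lemma dne (z : ℝ) : (1 + 4 * z ^ 2) ≠ 0 := by positivity

lemma hden (z : ℝ) : HasDerivAt (fun z : ℝ => 1 + 4 * z ^ 2) (8 * z) z := by
  have := ((hasDerivAt_pow 2 z).const_mul 4).const_add 1
  simpa using this.congr_deriv (by ring)

lemma hd0 (z : ℝ) : HasDerivAt f0 (f1 z) z := by
  have h := ((hasDerivAt_const z (4:ℝ)).div (hden z) (dne z)).const_add (-1)
  refine h.congr_deriv ?_
  unfold f1; field_simp; ring

lemma hd1 (z : ℝ) : HasDerivAt f1 (f2 z) z := by
  have hnum : HasDerivAt (fun z : ℝ => -32 * z) (-32) z := by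
    simpa using (hasDerivAt_id z).const_mul (-32)
  have hpow : HasDerivAt (fun z : ℝ => (1 + 4 * z ^ 2) ^ 2) (2 * (1 + 4 * z ^ 2) * (8 * z)) z := by
    simpa [mul_comm] using (hden z).fun_pow 2
  have h := hnum.div hpow (pow_ne_zero 2 (dne z))
  refine h.congr_deriv ?_
  unfold f2; field_simp; ring

lemma hd2 (z : ℝ) : HasDerivAt f2 (f3 z) z := by
  have hnum : HasDerivAt (fun z : ℝ => 384 * z ^ 2 - 32) (768 * z) z := by
    have := ((hasDerivAt_pow 2 z).const_mul 384).sub_const 32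
    simpa using this.congr_deriv (by ring)
  have hpow : HasDerivAt (fun z : ℝ => (1 + 4 * z ^ 2) ^ 3) (3 * (1 + 4 * z ^ 2) ^ 2 * (8 * z)) z := by
    simpa [mul_comm] using (hden z).fun_pow 3
  have h := hnum.div hpow (pow_ne_zero 3 (dne z))
  refine h.congr_deriv ?_
  unfold f3; field_simp; ring

lemma pdX_comp (g g' : ℝ → ℝ) (hg : ∀ z, HasDerivAt g (g' z) z) (x t : ℝ) :
    deriv (fun y => g (y - 6 * t)) x = g' (x - 6 * t) := by
  have h := (hg (x - 6 * t)).comp x ((hasDerivAt_id x).sub_const (6 * t))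
  simpa [Function.comp_def] using h.deriv

lemma pdT_comp (g g' : ℝ → ℝ) (hg : ∀ z, HasDerivAt g (g' z) z) (x t : ℝ) :
    deriv (fun s => g (x - 6 * s)) t = g' (x - 6 * t) * (-6) := by
  have hin : HasDerivAt (fun s : ℝ => x - 6 * s) (-6) t := by
    simpa using ((hasDerivAt_id t).const_mul (6:ℝ)).const_sub x
  have h := (hg (x - 6 * t)).comp t hin
  simpa [Function.comp_def] using h.deriv

/-- the algebraically decaying soliton on the background `−1`
(the `k = 0` limit of the "rogue" dn-periodic wave) solves the mKdV equation. -/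
theorem stmt_12 :
    ContDiff ℝ (⊤ : ℕ∞) (Function.uncurry
      (fun x t : ℝ => -1 + 4 / (1 + 4 * (x - 6 * t) ^ 2))) ∧
    IsMKdV (fun x t : ℝ => -1 + 4 / (1 + 4 * (x - 6 * t) ^ 2)) := by
  constructor
  · have hpoly : ContDiff ℝ (⊤ : ℕ∞) (fun p : ℝ × ℝ => 1 + 4 * (p.1 - 6 * p.2) ^ 2) := by
      fun_prop
    have hdiv : ContDiff ℝ (⊤ : ℕ∞)
        (fun p : ℝ × ℝ => -1 + 4 / (1 + 4 * (p.1 - 6 * p.2) ^ 2)) :=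
      contDiff_const.add (contDiff_const.div hpoly fun p => dne _)
    exact hdiv
  · intro x t
    have hu : (fun x t : ℝ => -1 + 4 / (1 + 4 * (x - 6 * t) ^ 2))
        = fun x t => f0 (x - 6 * t) := rfl
    have hX : pdX (fun x t : ℝ => -1 + 4 / (1 + 4 * (x - 6 * t) ^ 2))
        = fun x t => f1 (x - 6 * t) := by
      funext x t
      exact pdX_comp f0 f1 hd0 x t
    have hXX : pdX (pdX (fun x t : ℝ => -1 + 4 / (1 + 4 * (x - 6 * t) ^ 2)))
        = fun x t => f2 (x - 6 * t) := by
      funext x t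
      rw [hX]
      exact pdX_comp f1 f2 hd1 x t
    have hXXX : pdX (pdX (pdX (fun x t : ℝ => -1 + 4 / (1 + 4 * (x - 6 * t) ^ 2))))
        = fun x t => f3 (x - 6 * t) := by
      funext x t
      rw [hXX]
      exact pdX_comp f2 f3 hd2 x t
    have hT : pdT (fun x t : ℝ => -1 + 4 / (1 + 4 * (x - 6 * t) ^ 2)) x t
        = f1 (x - 6 * t) * (-6) := by
      exact pdT_comp f0 f1 hd0 x t
    rw [hT, hXXX, hX]
    show f1 (x - 6 * t) * (-6) + 6 * f0 (x - 6 * t) ^ 2 * f1 (x - 6 * t) + f3 (x - 6 * t) = 0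
    set z := x - 6 * t
    unfold f0 f1 f3
    field_simp
    ring
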